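/- Let Ω be an open subset of a topological measure space with a closed nonnegative quadratic form E, form domain F, and let λ₁(Ω) := inf{E(f)/‖f‖₂² : f ∈ F_c(Ω), f ≠ 0}, where F_c(Ω) is the set of elements of F compactly supported in Ω. Suppose the localized Nash inequality holds: for every ball B(x,r) and f ∈ F_c(B(x,r)), ‖f‖₂^{2(1+α)} ≤ (C r²/v_r(x)^α) ‖f‖₁^{2α} E(f). Then for every ball B(x,r) and every open Ω ⊆ B(x,r), λ₁(Ω) ≥ (c/r²)(v_r(x)/μ(Ω))^α with c = C^{−1}. -/

import Mathlib

open MeasureTheory ENNReal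

/-!
Hölder's inequality on `Ω` gives `‖f‖₁^{2α} ≤ μ(Ω)^α ‖f‖₂^{2α}` for `f` supported in `Ω`.
Inserting this into the Nash inequality on a ball containing `Ω` and cancelling the finite,
nonzero factor `‖f‖₂^{2α}` leaves `‖f‖₂² ≤ (C r² / v_r(x)^α) μ(Ω)^α E(f)`, which is the
Faber–Krahn bound for the Rayleigh quotient of `f`.
-/

theorem eLpNorm_le_eLpNorm_mul_measure_rpow_of_support_subset {X ε : Type*}
    [MeasurableSpace X] {μ : Measure X} [NormedAddCommGroup ε] {f : X → ε} {s : Set X}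
    {p q : ℝ≥0∞} (hpq : p ≤ q) (hf : AEStronglyMeasurable f μ) (hfs : f.support ⊆ s) :
    eLpNorm f p μ ≤ eLpNorm f q μ * μ s ^ (1 / p.toReal - 1 / q.toReal) := by
  simpa only [eLpNorm_restrict_eq_of_support_subset hfs, Measure.restrict_apply_univ] using
    eLpNorm_le_eLpNorm_mul_rpow_measure_univ (μ := μ.restrict s) hpq hf.restrict

theorem eLpNorm_one_le_eLpNorm_two_mul_sqrt_measure {X ε : Type*}
    [MeasurableSpace X] {μ : Measure X} [NormedAddCommGroup ε] {f : X → ε} {s : Set X}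
    (hf : AEStronglyMeasurable f μ) (hfs : f.support ⊆ s) :
    eLpNorm f 1 μ ≤ eLpNorm f 2 μ * μ s ^ (1 / 2 : ℝ) := by
  have h := eLpNorm_le_eLpNorm_mul_measure_rpow_of_support_subset one_le_two hf hfs
  norm_num at h
  simpa only [one_div] using h

namespace ENNReal

/-- The algebraic core of `Nash ⇒ Faber–Krahn`: read `a = ‖f‖₂`, `b = ‖f‖₁`, `m = μ(Ω)`. -/
theorem sq_le_of_rpow_le_mul_rpow {a b K m e : ℝ≥0∞} {α : ℝ} (hα : 0 ≤ α)
    (ha₀ : a ≠ 0) (ha : a ≠ ∞) (hNash : a ^ (2 * (1 + α)) ≤ K * b ^ (2 * α) * e)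
    (hHolder : b ≤ a * m ^ (1 / 2 : ℝ)) :
    a ^ 2 ≤ K * m ^ α * e := by
  have hb : b ^ (2 * α) ≤ a ^ (2 * α) * m ^ α := by
    calc b ^ (2 * α) ≤ (a * m ^ (1 / 2 : ℝ)) ^ (2 * α) := by gcongr
      _ = a ^ (2 * α) * m ^ α := by
        rw [mul_rpow_of_nonneg _ _ (by positivity), ← rpow_mul]
        ring_nf
  have hsplit : a ^ (2 * (1 + α)) = a ^ 2 * a ^ (2 * α) := by
    rw [← rpow_natCast a 2, ← rpow_add _ _ ha₀ ha]
    ring_nf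
  rw [← ENNReal.mul_le_mul_iff_left (rpow_pos ha₀.bot_lt ha).ne' (rpow_ne_top_of_ne_zero ha₀ ha),
    ← hsplit]
  calc a ^ (2 * (1 + α)) ≤ K * b ^ (2 * α) * e := hNash
    _ ≤ K * (a ^ (2 * α) * m ^ α) * e := by gcongr
    _ = K * m ^ α * e * a ^ (2 * α) := by ring

theorem inv_mul_div_rpow_mul_div_mul_rpow_le_one (R V m : ℝ≥0∞) {α : ℝ} (hα : 0 ≤ α) :
    R⁻¹ * (V / m) ^ α * (R / V ^ α * m ^ α) ≤ 1 := by
  have hVm : (V / m) ^ α * m ^ α ≤ V ^ α := by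
    rw [← mul_rpow_of_nonneg _ _ hα]
    gcongr
    rw [mul_comm]
    exact ENNReal.mul_div_le
  calc R⁻¹ * (V / m) ^ α * (R / V ^ α * m ^ α)
      = (R⁻¹ * R) * ((V / m) ^ α * m ^ α * (V ^ α)⁻¹) := by
        simp only [div_eq_mul_inv]; ring
    _ ≤ 1 * (V ^ α * (V ^ α)⁻¹) := by gcongr; exact ENNReal.inv_mul_le_one R
    _ ≤ 1 := by rw [one_mul]; exact ENNReal.mul_inv_le_one _

theorem inv_mul_div_rpow_le_div_sq {R V m a e : ℝ≥0∞} {α : ℝ} (hα : 0 ≤ α)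
    (ha₀ : a ≠ 0) (ha : a ≠ ∞) (h : a ^ 2 ≤ R / V ^ α * m ^ α * e) :
    R⁻¹ * (V / m) ^ α ≤ e / a ^ 2 := by
  rw [ENNReal.le_div_iff_mul_le (Or.inl (pow_ne_zero 2 ha₀)) (Or.inl (pow_ne_top ha))]
  calc R⁻¹ * (V / m) ^ α * a ^ 2
      ≤ R⁻¹ * (V / m) ^ α * (R / V ^ α * m ^ α) * e := by rw [mul_assoc _ _ e]; gcongr
    _ ≤ 1 * e := by gcongr; exact inv_mul_div_rpow_mul_div_mul_rpow_le_one R V m hα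
    _ = e := one_mul e

end ENNReal

theorem stmt19_general {M : Type*} [PseudoMetricSpace M] [MeasurableSpace M] (μ : Measure M)
    (v : M → ℝ → ℝ)
    (F : Set (M → ℝ)) (E : (M → ℝ) → ℝ≥0∞)
    (hF2 : ∀ f ∈ F, MemLp f 2 μ)
    (α : ℝ) (hα : 0 < α)
    (C : ℝ≥0∞)
    (hHLN : ∀ (x : M) (r : ℝ), 0 < r → ∀ f : M → ℝ,
      f ∈ F → tsupport f ⊆ Metric.ball x r → IsCompact (tsupport f) →
      (eLpNorm f 2 μ) ^ (2 * (1 + α)) ≤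
        (C * ENNReal.ofReal (r ^ 2) / ENNReal.ofReal (v x r) ^ α) *
          (eLpNorm f 1 μ) ^ (2 * α) * E f) :
    ∀ (x : M) (r : ℝ), 0 < r → ∀ Ω : Set M, IsOpen Ω → Ω ⊆ Metric.ball x r →
      (C * ENNReal.ofReal (r ^ 2))⁻¹ * (ENNReal.ofReal (v x r) / μ Ω) ^ α ≤
        ⨅ f ∈ {f : M → ℝ | f ∈ F ∧ tsupport f ⊆ Ω ∧ IsCompact (tsupport f) ∧
          eLpNorm f 2 μ ≠ 0}, E f / (eLpNorm f 2 μ) ^ 2 := by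
  intro x r hr Ω _ hΩ
  refine le_iInf₂ fun f ⟨hfF, hfΩ, hfc, hf₀⟩ => ?_
  have hf : eLpNorm f 2 μ ≠ ∞ := (hF2 f hfF).eLpNorm_ne_top
  have hHolder := eLpNorm_one_le_eLpNorm_two_mul_sqrt_measure (hF2 f hfF).1
    ((subset_tsupport f).trans hfΩ)
  exact ENNReal.inv_mul_div_rpow_le_div_sq hα.le hf₀ hf <|
    ENNReal.sq_le_of_rpow_le_mul_rpow hα.le hf₀ hf
      (hHLN x r hr f hfF (hfΩ.trans hΩ) hfc) hHolder

/-- The homogeneous localized Nash inequality `(HLN^v_α)` implies the relative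
`v`-Faber–Krahn inequality `(FK^v_α)`: if for every ball `B(x,r)` and every
`f ∈ F_c(B(x,r))` one has `‖f‖₂^{2(1+α)} ≤ (C r²/v_r(x)^α) ‖f‖₁^{2α} E(f)`, then for
every ball `B(x,r)` and every open `Ω ⊆ B(x,r)`,
`λ₁(Ω) := inf{E(f)/‖f‖₂² : f ∈ F_c(Ω), f ≠ 0} ≥ (c/r²)(v_r(x)/μ(Ω))^α` with `c = C⁻¹`. -/
theorem stmt19 {M : Type*} [PseudoMetricSpace M] [MeasurableSpace M] (μ : Measure M)
    (v : M → ℝ → ℝ) (hv_pos : ∀ x r, 0 < r → 0 < v x r)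
    (F : Set (M → ℝ)) (E : (M → ℝ) → ℝ≥0∞)
    (hF2 : ∀ f ∈ F, MemLp f 2 μ)
    (α : ℝ) (hα : 0 < α)
    (C : ℝ≥0∞) (hC : 0 < C)
    (hHLN : ∀ (x : M) (r : ℝ), 0 < r → ∀ f : M → ℝ,
      f ∈ F → tsupport f ⊆ Metric.ball x r → IsCompact (tsupport f) →
      (eLpNorm f 2 μ) ^ (2 * (1 + α)) ≤
        (C * ENNReal.ofReal (r ^ 2) / ENNReal.ofReal (v x r) ^ α) *
          (eLpNorm f 1 μ) ^ (2 * α) * E f) :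
    ∀ (x : M) (r : ℝ), 0 < r → ∀ Ω : Set M, IsOpen Ω → Ω ⊆ Metric.ball x r →
      (C * ENNReal.ofReal (r ^ 2))⁻¹ * (ENNReal.ofReal (v x r) / μ Ω) ^ α ≤
        ⨅ f ∈ {f : M → ℝ | f ∈ F ∧ tsupport f ⊆ Ω ∧ IsCompact (tsupport f) ∧
          eLpNorm f 2 μ ≠ 0}, E f / (eLpNorm f 2 μ) ^ 2 :=
  stmt19_general μ v F E hF2 α hα C hHLN
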